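/- arXiv:2011.13708 — 6 statements merged into one kernel-verified Lean document; each statement's English description precedes it below -/
import Mathlib

section
/- Let ρ ≥ 3 and r be primes such that r is a primitive root modulo ρ², and let b ≥ 1 be an integer. If f(x) ∈ ℤ[x] is monic and f(x) ≡ Φ_{ρ^b}(x) (mod r), then f(x) is irreducible over ℚ. -/
/-!
A primitive root `r` modulo `ρ²` is a primitive root modulo every `ρ ^ b`: its order modulo `ρ`
is `ρ - 1`, and `r ^ (ρ - 1) = 1 + ρ c` with `ρ ∤ c` has order `ρ ^ (b - 1)` modulo `ρ ^ b`.
The irreducible factors of `Φₙ` over `𝔽_r` have degree the order of `r` modulo `n`, so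
`Φ_{ρ ^ b}` stays irreducible modulo `r`. A monic integer polynomial with irreducible reduction
is irreducible over `ℤ`, hence over `ℚ` by Gauss's lemma.
-/

open Polynomial

namespace ZMod

theorem coprime_of_orderOf_natCast_eq_totient {a m : ℕ} [NeZero m]
    (h : orderOf (a : ZMod m) = m.totient) : a.Coprime m := by
  have hpos : 0 < orderOf (a : ZMod m) := h ▸ Nat.totient_pos.mpr (NeZero.pos m)
  exact (isUnit_iff_coprime a m).mp (orderOf_pos_iff.mp hpos).isUnit

theorem orderOf_natCast_eq_totient_of_dvd {a m n : ℕ} [NeZero m] (hnm : n ∣ m)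
    (h : orderOf (a : ZMod m) = m.totient) : orderOf (a : ZMod n) = n.totient := by
  have : NeZero n := ⟨fun hn => NeZero.ne m (Nat.eq_zero_of_zero_dvd (hn ▸ hnm))⟩
  set u := unitOfCoprime a (coprime_of_orderOf_natCast_eq_totient h)
  have hu : Subgroup.zpowers u = ⊤ := by
    refine Subgroup.eq_top_of_card_eq _ ?_
    rw [Nat.card_zpowers, ← orderOf_units, coe_unitOfCoprime, h, Nat.card_eq_fintype_card,
      card_units_eq_totient]
  have hv : Subgroup.zpowers (unitsMap hnm u) = ⊤ := by
    rw [← MonoidHom.map_zpowers, hu, Subgroup.map_top_of_surjective _ (unitsMap_surjective hnm)]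
  rw [← card_units_eq_totient, ← Nat.card_eq_fintype_card,
    ← orderOf_eq_card_of_zpowers_eq_top hv, ← orderOf_units, unitsMap_val, coe_unitOfCoprime, cast_natCast hnm]

theorem exists_pow_pred_eq_one_add_mul {p a : ℕ} (hp : p.Prime) (ha : a.Coprime p)
    (h : (a : ZMod (p ^ 2)) ^ (p - 1) ≠ 1) :
    ∃ c : ℤ, ¬ (p : ℤ) ∣ c ∧ (a : ℤ) ^ (p - 1) = 1 + p * c := by
  obtain ⟨c, hc⟩ : (p : ℤ) ∣ (a : ℤ) ^ (p - 1) - 1 :=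
    (Int.ModEq.pow_card_sub_one_eq_one hp (Nat.isCoprime_iff_coprime.mpr ha)).symm.dvd
  refine ⟨c, fun ⟨d, hd⟩ => h ?_, by linarith⟩
  have h1 : ((1 : ℤ) : ZMod (p ^ 2)) = (((a : ℤ) ^ (p - 1) : ℤ) : ZMod (p ^ 2)) :=
    (intCast_eq_intCast_iff_dvd_sub _ _ _).mpr ⟨d, by rw [hc, hd]; push_cast; ring⟩
  push_cast at h1
  exact h1.symm

theorem orderOf_natCast_prime_pow_eq_totient {p a : ℕ} (hp : p.Prime) (hp2 : p ≠ 2)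
    (h : orderOf (a : ZMod (p ^ 2)) = (p ^ 2).totient) (n : ℕ) :
    orderOf (a : ZMod (p ^ n)) = (p ^ n).totient := by
  have : NeZero p := ⟨hp.ne_zero⟩
  have ha : a.Coprime p :=
    (coprime_of_orderOf_natCast_eq_totient h).coprime_dvd_right (dvd_pow_self p two_ne_zero)
  rcases n with _ | n
  · rw [pow_zero, Nat.totient_one, orderOf_eq_one_iff]
    exact Subsingleton.elim _ _
  have hmod_p : orderOf (a : ZMod p) = p - 1 := by
    rw [← Nat.totient_prime hp]
    exact orderOf_natCast_eq_totient_of_dvd (dvd_pow_self p two_ne_zero) h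
  have hne : (a : ZMod (p ^ 2)) ^ (p - 1) ≠ 1 := fun h1 => by
    have hle := orderOf_le_of_pow_eq_one (Nat.sub_pos_of_lt hp.one_lt) h1
    rw [h, Nat.totient_prime_pow_succ hp, pow_one] at hle
    exact hle.not_gt (lt_mul_left (Nat.sub_pos_of_lt hp.one_lt) hp.one_lt)
  obtain ⟨c, hc, hac⟩ := exists_pow_pred_eq_one_add_mul hp ha hne
  have hlift : orderOf ((a : ZMod (p ^ (n + 1))) ^ (p - 1)) = p ^ n := by
    have hcast : (a : ZMod (p ^ (n + 1))) ^ (p - 1) = 1 + p * c := by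
      exact_mod_cast congrArg (Int.cast : ℤ → ZMod (p ^ (n + 1))) hac
    rw [hcast, orderOf_one_add_mul_prime hp hp2 c hc n]
  apply Nat.dvd_antisymm
  · apply orderOf_dvd_of_pow_eq_one
    exact_mod_cast (natCast_eq_natCast_iff _ _ _).mpr (Nat.ModEq.pow_totient (ha.pow_right _))
  · have hcop : (p ^ n).Coprime (p - 1) :=
      Nat.Coprime.pow_left n ((Nat.coprime_self_sub_right hp.one_le).mpr (Nat.coprime_one_right p))
    rw [Nat.totient_prime_pow_succ hp]
    refine hcop.mul_dvd_of_dvd_of_dvd (hlift ▸ orderOf_pow_dvd _) ?_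
    have := orderOf_map_dvd (castHom (dvd_pow_self p n.succ_ne_zero) (ZMod p)).toMonoidHom
      (a : ZMod (p ^ (n + 1)))
    rwa [RingHom.toMonoidHom_eq_coe, MonoidHom.coe_coe, map_natCast, hmod_p] at this

end ZMod

theorem Polynomial.irreducible_cyclotomic_zmod_of_orderOf_eq_totient {p n : ℕ} [Fact p.Prime]
    [NeZero n] (h : orderOf (p : ZMod n) = n.totient) : Irreducible (cyclotomic n (ZMod p)) := by
  have hpn : ¬ p ∣ n :=
    (Nat.Prime.coprime_iff_not_dvd Fact.out).mp (ZMod.coprime_of_orderOf_natCast_eq_totient h)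
  refine ZMod.irreducible_of_dvd_cyclotomic_of_natDegree hpn dvd_rfl ?_
  rw [natDegree_cyclotomic, ← h, ← orderOf_units, ZMod.coe_unitOfCoprime]

theorem monic_congr_cyclotomic_irreducible_general (ρ r : ℕ) (hρ : ρ.Prime) (hρ3 : 3 ≤ ρ)
    (hr : r.Prime) (hprim : orderOf (r : ZMod (ρ ^ 2)) = (ρ ^ 2).totient)
    (b : ℕ) (f : Polynomial ℤ) (hf : f.Monic)
    (hcong : f.map (Int.castRingHom (ZMod r)) = Polynomial.cyclotomic (ρ ^ b) (ZMod r)) :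
    Irreducible (f.map (Int.castRingHom ℚ)) := by
  have : Fact r.Prime := ⟨hr⟩
  have : NeZero ρ := ⟨hρ.ne_zero⟩
  have hord := ZMod.orderOf_natCast_prime_pow_eq_totient hρ (by omega) hprim b
  have hirr := irreducible_cyclotomic_zmod_of_orderOf_eq_totient hord
  rw [← hcong] at hirr
  exact (IsPrimitive.Int.irreducible_iff_irreducible_map_cast hf.isPrimitive).mp
    (hf.irreducible_of_irreducible_map _ _ hirr)

theorem monic_congr_cyclotomic_irreducible (ρ r : ℕ) (hρ : ρ.Prime) (hρ3 : 3 ≤ ρ)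
    (hr : r.Prime) (hprim : orderOf (r : ZMod (ρ ^ 2)) = (ρ ^ 2).totient)
    (b : ℕ) (hb : 1 ≤ b) (f : Polynomial ℤ) (hf : f.Monic)
    (hcong : f.map (Int.castRingHom (ZMod r)) = Polynomial.cyclotomic (ρ ^ b) (ZMod r)) :
    Irreducible (f.map (Int.castRingHom ℚ)) :=
  monic_congr_cyclotomic_irreducible_general ρ r hρ hρ3 hr hprim b f hf hcong
end

section
/- Let N ≥ 2 and let P(x) = Σ_{j=0}^N c_j x^j ∈ ℝ[x] be a reciprocal polynomial (meaning P(x) = x^N P(1/x)) with c_N ≠ 0. Suppose there exists δ ∈ ℝ with c_N δ ≥ 0 and |c_N| ≥ |δ| such that |c_N + δ| ≥ Σ_{j=1}^{N-1} |c_j + δ − c_N|. Then every complex zero of P has modulus 1. -/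
/-!
For a self-reciprocal real polynomial `R` of degree `N`, `R (e^{2it}) = e^{iNt} T(t)` with `T`
real. If `ε * Re R(ω) > 0` at every `N`-th root of unity `ω = e^{2πik/N}`, then `T` alternates in
sign at the nodes `kπ/N`, so it has `N` zeros in `(0, π)` and `R` has `N` distinct roots on the
unit circle, which are all of its roots.

With `c = c_N` and `b_j = c_j + δ - c`, at such an `ω` one has
`P(ω) = 2c + (c - δ) (∑_{j<N} ω^j - 1) + ∑_{0<j<N} b_j ω^j`, where `∑_{j<N} ω^j ∈ {0, N}`, so the
hypotheses give `c Re P(ω) ≥ |c| (|c + δ| - ∑ |b_j|) ≥ 0`. For strictness replace `P` by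
`P_t = P - t E`, `E = ∑_{0<j<N} b_j X^j`, which scales every `b_j` by `1 - t`. All roots of `P_t`
lie on the circle, so at a root `z` of `P`, `|c| |‖z‖ - 1|^N ≤ ‖P_t(z)‖ = t ‖E(z)‖`; let `t → 0`.
-/

open Polynomial Complex Set ComplexConjugate Real

theorem exists_mem_Ioo_eq_zero_of_mul_neg {f : ℝ → ℝ} {a b : ℝ} (hab : a ≤ b)
    (hf : ContinuousOn f (Icc a b)) (h : f a * f b < 0) : ∃ c ∈ Ioo a b, f c = 0 := by
  rcases mul_neg_iff.mp h with ⟨ha, hb⟩ | ⟨ha, hb⟩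
  · exact intermediate_value_Ioo' hab hf ⟨hb, ha⟩
  · exact intermediate_value_Ioo hab hf ⟨ha, hb⟩

theorem exists_strictMono_zeros_of_alternating {f : ℝ → ℝ} (hf : Continuous f) {x : ℕ → ℝ}
    (hx : StrictMono x) {n : ℕ} (hsign : ∀ k ≤ n, 0 < (-1) ^ k * f (x k)) :
    ∃ τ : Fin n → ℝ, StrictMono τ ∧ (∀ k : Fin n, τ k ∈ Ioo (x k) (x (k + 1 : ℕ))) ∧
      ∀ k, f (τ k) = 0 := by
  have hmul (k : ℕ) (hk : k < n) : f (x k) * f (x (k + 1)) < 0 := by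
    have h₀ := hsign k hk.le
    have h₁ := hsign (k + 1) hk
    rw [pow_succ] at h₁
    rcases neg_one_pow_eq_or ℝ k with h | h <;> rw [h] at h₀ h₁ <;> nlinarith
  choose τ hτ hzero using fun k : Fin n =>
    exists_mem_Ioo_eq_zero_of_mul_neg (hx k.1.lt_succ_self).le hf.continuousOn (hmul k k.2)
  refine ⟨τ, fun i j hij => ?_, hτ, hzero⟩
  calc τ i < x (i + 1) := (hτ i).2
    _ ≤ x j := hx.monotone (Nat.succ_le_of_lt hij)
    _ < τ j := (hτ j).1

theorem re_geom_sum_nonneg_of_pow_eq_one {N : ℕ} {ω : ℂ} (h : ω ^ N = 1) :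
    0 ≤ (∑ j ∈ Finset.range N, ω ^ j).re := by
  rcases eq_or_ne ω 1 with rfl | hω
  · simp
  · rw [geom_sum_eq hω, h, sub_self, zero_div, zero_re]

theorem norm_sum_ofReal_mul_pow_le {ω : ℂ} (hω : ‖ω‖ = 1) (s : Finset ℕ) (b : ℕ → ℝ) :
    ‖∑ j ∈ s, (b j : ℂ) * ω ^ j‖ ≤ ∑ j ∈ s, |b j| :=
  (norm_sum_le _ _).trans_eq <| Finset.sum_congr rfl fun j _ => by
    rw [norm_mul, norm_pow, hω, one_pow, mul_one, norm_real, Real.norm_eq_abs]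

namespace Polynomial

theorem norm_leadingCoeff_mul_le_norm_eval {K : Type*} [NormedField K] [IsAlgClosed K]
    {p : K[X]} (hp : ∀ a ∈ p.roots, ‖a‖ = 1) (z : K) :
    ‖p.leadingCoeff‖ * |‖z‖ - 1| ^ p.natDegree ≤ ‖p.eval z‖ := by
  have norm_prod (m : Multiset K) : ‖m.prod‖ = (m.map (‖·‖)).prod :=
    map_multiset_prod (normHom : K →*₀ ℝ) m
  conv_rhs => rw [← C_leadingCoeff_mul_prod_multiset_X_sub_C
    (IsAlgClosed.card_roots_eq_natDegree (p := p))]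
  rw [eval_mul, eval_C, eval_multiset_prod, norm_mul, ← IsAlgClosed.card_roots_eq_natDegree,
    norm_prod, Multiset.map_map, Multiset.map_map, ← Multiset.prod_replicate,
    ← Multiset.map_const']
  gcongr
  refine Multiset.prod_map_le_prod_map₀ _ _ (fun _ _ => abs_nonneg _) fun a ha => ?_
  simpa [hp a ha] using abs_norm_sub_norm_le z a

theorem roots_eq_map_of_injective {K : Type*} [CommRing K] [IsDomain K] {p : K[X]} (hp : p ≠ 0)
    {n : ℕ} (hdeg : p.natDegree ≤ n) {r : Fin n → K} (hr : Function.Injective r)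
    (hroot : ∀ k, p.IsRoot (r k)) : p.roots = Finset.univ.val.map r := by
  refine (Multiset.eq_of_le_of_card_le ?_ ?_).symm
  · refine (Multiset.le_iff_subset (Finset.univ.nodup.map hr)).mpr fun a ha => ?_
    obtain ⟨k, -, rfl⟩ := Multiset.mem_map.mp ha
    exact (mem_roots hp).mpr (hroot k)
  · simpa using (card_roots' p).trans hdeg

theorem reflect_eq_self_iff {S : Type*} [Semiring S] {N : ℕ} {p : S[X]} :
    reflect N p = p ↔ ∀ j ≤ N, p.coeff j = p.coeff (N - j) := by
  constructor
  · intro h j hj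
    conv_lhs => rw [← h]
    rw [coeff_reflect, revAt_le hj]
  · intro h
    ext j
    rcases le_or_gt j N with hj | hj
    · rw [coeff_reflect, revAt_le hj, h j hj]
    · rw [coeff_reflect, revAt_eq_self_of_lt hj]

-- `= ∑ j, R.coeff j * cos ((2 j - N) t)` when `reflect N R = R` and `R.natDegree ≤ N`
noncomputable def trigPoly (N : ℕ) (R : ℝ[X]) (t : ℝ) : ℝ :=
  (cexp (-(N * t * I)) * aeval (cexp (2 * t * I)) R).re

variable {N : ℕ} {R : ℝ[X]}

theorem continuous_trigPoly : Continuous (trigPoly N R) := by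
  unfold trigPoly
  fun_prop

theorem conj_exp_mul_aeval_exp (hdeg : R.natDegree ≤ N) (hR : reflect N R = R) (t : ℝ) :
    conj (cexp (-(N * t * I)) * aeval (cexp (2 * t * I)) R)
      = cexp (-(N * t * I)) * aeval (cexp (2 * t * I)) R := by
  set x := cexp (2 * t * I)
  let _ : Invertible x := invertibleOfNonzero (Complex.exp_ne_zero _)
  -- `R (x⁻¹) * x ^ N = R x` by self-reciprocity, and `conj x = x⁻¹` on the unit circle
  have hrefl := eval₂_reflect_mul_pow (algebraMap ℝ ℂ) x N R hdeg
  rw [hR, ← aeval_def, ← aeval_def] at hrefl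
  have hconj : conj x = ⅟x := by
    rw [invOf_eq_inv, ← Complex.exp_conj, ← Complex.exp_neg]
    simp [map_ofNat]
  have hRconj : conj (aeval x R) = aeval (⅟x) R := by
    rw [← hconj, ← Complex.conjAe_coe, ← aeval_algHom_apply, Complex.conjAe_coe]
  have hexp : conj (cexp (-(N * t * I))) = cexp (N * t * I) := by
    rw [← Complex.exp_conj]; simp
  have hxN : x ^ N = cexp (N * t * I) ^ 2 := by
    rw [← Complex.exp_nat_mul, ← Complex.exp_nat_mul]; ring_nf
  rw [map_mul, hexp, hRconj, Complex.exp_neg, ← hrefl, hxN]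
  field_simp [Complex.exp_ne_zero]

theorem aeval_exp_eq_exp_mul_trigPoly (hdeg : R.natDegree ≤ N) (hR : reflect N R = R) (t : ℝ) :
    aeval (cexp (2 * t * I)) R = cexp (N * t * I) * trigPoly N R t := by
  rw [trigPoly, Complex.conj_eq_iff_re.mp (conj_exp_mul_aeval_exp hdeg hR t), ← mul_assoc,
    ← Complex.exp_add, add_neg_cancel, Complex.exp_zero, one_mul]

theorem neg_one_pow_mul_trigPoly (hN : N ≠ 0) (k : ℕ) :
    (-1) ^ k * trigPoly N R (k * π / N) = (aeval (cexp (2 * (k * π / N : ℝ) * I)) R).re := by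
  have hsign : cexp (-(N * (k * π / N : ℝ) * I)) = ((-1) ^ k : ℝ) := by
    rw [show -(N * (k * π / N : ℝ) * I) = k * (-(π * I)) by push_cast; field_simp,
      Complex.exp_nat_mul, Complex.exp_neg_pi_mul_I]
    push_cast; rfl
  rw [trigPoly, hsign, Complex.re_ofReal_mul, ← mul_assoc, ← mul_pow]
  norm_num

theorem exists_injective_roots_norm_eq_one_of_re_pos (hN : 0 < N) (hdeg : R.natDegree ≤ N)
    (hR : reflect N R = R) {ε : ℝ} (hpos : ∀ ω : ℂ, ω ^ N = 1 → 0 < ε * (aeval ω R).re) :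
    ∃ r : Fin N → ℂ, Function.Injective r ∧ (∀ k, ‖r k‖ = 1) ∧ ∀ k, aeval (r k) R = 0 := by
  have hε : ε ≠ 0 := left_ne_zero_of_mul (hpos 1 (one_pow N)).ne'
  set x : ℕ → ℝ := fun k => k * π / N
  have hx : StrictMono x := fun i j hij => by
    simp only [x]; gcongr
  have hsign (k : ℕ) (_ : k ≤ N) : 0 < (-1) ^ k * (ε * trigPoly N R (x k)) := by
    rw [mul_left_comm, neg_one_pow_mul_trigPoly hN.ne']
    refine hpos _ ?_
    rw [← Complex.exp_nat_mul, ← Complex.exp_nat_mul_two_pi_mul_I k]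
    have : (N : ℂ) ≠ 0 := by exact_mod_cast hN.ne'
    congr 1
    push_cast
    field_simp
  obtain ⟨τ, hτ, hτx, hτzero⟩ := exists_strictMono_zeros_of_alternating
    (f := fun t => ε * trigPoly N R t) (continuous_const.mul continuous_trigPoly) hx hsign
  have hτ_mem (k : Fin N) : 2 * τ k ∈ Ico 0 (2 * π) := by
    have h₀ : 0 ≤ x k := by simp only [x]; positivity
    have h₁ : x (k + 1 : ℕ) ≤ π := by simpa [x, hN.ne'] using hx.monotone k.2
    constructor <;> linarith [(hτx k).1, (hτx k).2]
  refine ⟨fun k => cexp (2 * τ k * I), fun i j hij => hτ.injective ?_, fun k => ?_, fun k => ?_⟩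
  · have := Circle.exp_injOn_Ico (sub_zero _).le (hτ_mem i) (hτ_mem j)
      (Subtype.ext (by simpa [Circle.coe_exp] using hij))
    linarith
  · simpa using Complex.norm_exp_ofReal_mul_I (2 * τ k)
  · rw [aeval_exp_eq_exp_mul_trigPoly hdeg hR, (mul_eq_zero.mp (hτzero k)).resolve_left hε]
    simp

theorem norm_eq_one_of_mem_roots_of_re_pos (hN : 0 < N) (hdeg : R.natDegree ≤ N)
    (hR : reflect N R = R) {ε : ℝ} (hpos : ∀ ω : ℂ, ω ^ N = 1 → 0 < ε * (aeval ω R).re) :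
    ∀ z ∈ (R.map (algebraMap ℝ ℂ)).roots, ‖z‖ = 1 := by
  obtain ⟨r, hr, hnorm, hroot⟩ := exists_injective_roots_norm_eq_one_of_re_pos hN hdeg hR hpos
  have hR0 : R.map (algebraMap ℝ ℂ) ≠ 0 := by
    rw [Ne, Polynomial.map_eq_zero_iff (algebraMap ℝ ℂ).injective]
    rintro rfl
    simpa using hpos 1 (one_pow N)
  intro z hz
  rw [roots_eq_map_of_injective hR0 (by rwa [natDegree_map]) hr
    fun k => by rw [IsRoot, eval_map_algebraMap, hroot]] at hz
  obtain ⟨k, -, rfl⟩ := Multiset.mem_map.mp hz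
  exact hnorm k

theorem aeval_eq_of_pow_eq_one (hN : 0 < N) (hdeg : R.natDegree ≤ N) (hR : reflect N R = R)
    (δ : ℝ) {ω : ℂ} (hω : ω ^ N = 1) :
    aeval ω R = 2 * R.coeff N + (R.coeff N - δ) * (∑ j ∈ Finset.range N, ω ^ j - 1)
      + ∑ j ∈ Finset.Ico 1 N, ((R.coeff j + δ - R.coeff N : ℝ) : ℂ) * ω ^ j := by
  have hc0 : R.coeff 0 = R.coeff N := by simpa using reflect_eq_self_iff.mp hR 0 N.zero_le
  have hG : ∑ j ∈ Finset.range N, ω ^ j = 1 + ∑ j ∈ Finset.Ico 1 N, ω ^ j := by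
    rw [Finset.range_eq_Ico, Finset.sum_eq_sum_Ico_succ_bot hN, pow_zero]
  rw [aeval_eq_sum_range' (Nat.lt_succ_of_le hdeg), Finset.sum_range_succ, Finset.range_eq_Ico,
    Finset.sum_eq_sum_Ico_succ_bot hN, hω, ← Finset.range_eq_Ico, hG, add_sub_cancel_left,
    Finset.mul_sum, hc0]
  simp only [Complex.real_smul, pow_zero, mul_one]
  push_cast
  have hsplit : ∑ j ∈ Finset.Ico 1 N, (R.coeff j : ℂ) * ω ^ j
      = ∑ j ∈ Finset.Ico 1 N, ((R.coeff N - δ) * ω ^ j + (R.coeff j + δ - R.coeff N) * ω ^ j) :=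
    Finset.sum_congr rfl fun j _ => by ring
  rw [hsplit, Finset.sum_add_distrib]
  ring

theorem norm_eq_one_of_mem_roots_of_sum_lt (hN : 0 < N) (hdeg : R.natDegree ≤ N)
    (hR : reflect N R = R) {δ : ℝ} (hδ₁ : 0 ≤ R.coeff N * δ) (hδ₂ : |δ| ≤ |R.coeff N|)
    (hδ₃ : ∑ j ∈ Finset.Ico 1 N, |R.coeff j + δ - R.coeff N| < |R.coeff N + δ|) :
    ∀ z ∈ (R.map (algebraMap ℝ ℂ)).roots, ‖z‖ = 1 := by
  set c := R.coeff N
  set b : ℕ → ℝ := fun j => R.coeff j + δ - c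
  have hc : c ≠ 0 := by
    rintro hc
    rw [hc, abs_zero, abs_nonpos_iff] at hδ₂
    simp only [hc, hδ₂, add_zero, abs_zero] at hδ₃
    exact hδ₃.not_ge (Finset.sum_nonneg fun j _ => abs_nonneg _)
  refine norm_eq_one_of_mem_roots_of_re_pos hN hdeg hR (ε := c) fun ω hω => ?_
  set G := ∑ j ∈ Finset.range N, ω ^ j
  set B := ∑ j ∈ Finset.Ico 1 N, (b j : ℂ) * ω ^ j
  have hre : (aeval ω R).re = 2 * c + (c - δ) * (G.re - 1) + B.re := by
    simp [aeval_eq_of_pow_eq_one hN hdeg hR δ hω, G, B, b, c]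
  have hG : 0 ≤ G.re := re_geom_sum_nonneg_of_pow_eq_one hω
  have hB : |B.re| ≤ ∑ j ∈ Finset.Ico 1 N, |b j| :=
    (abs_re_le_norm B).trans (norm_sum_ofReal_mul_pow_le (norm_eq_one_of_pow_eq_one hω hN.ne') _ b)
  have hcδ : 0 ≤ c * (c - δ) := by
    nlinarith [abs_mul_abs_self c, abs_mul c δ, abs_nonneg δ, le_abs_self (c * δ)]
  have hcB : -(|c| * ∑ j ∈ Finset.Ico 1 N, |b j|) ≤ c * B.re := by
    nlinarith [abs_mul c B.re, neg_abs_le (c * B.re), abs_nonneg c]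
  have hcc : c * (c + δ) = |c| * |c + δ| := by
    rw [← abs_mul, abs_of_nonneg (by nlinarith)]
  rw [hre]
  nlinarith [abs_pos.mpr hc]

noncomputable def deviation (N : ℕ) (δ : ℝ) (R : ℝ[X]) : ℝ[X] :=
  ∑ j ∈ Finset.Ico 1 N, C (R.coeff j + δ - R.coeff N) * X ^ j

theorem coeff_deviation (δ : ℝ) (j : ℕ) :
    (deviation N δ R).coeff j = if j ∈ Finset.Ico 1 N then R.coeff j + δ - R.coeff N else 0 := by
  simp only [deviation, finsetSum_coeff, coeff_C_mul_X_pow]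
  exact Finset.sum_ite_eq (Finset.Ico 1 N) j _

theorem natDegree_deviation_le (δ : ℝ) : (deviation N δ R).natDegree ≤ N :=
  natDegree_le_iff_coeff_eq_zero.mpr fun j hj => by
    rw [coeff_deviation, if_neg (by simp only [Finset.mem_Ico]; omega)]

theorem reflect_deviation (hR : reflect N R = R) (δ : ℝ) :
    reflect N (deviation N δ R) = deviation N δ R := by
  refine reflect_eq_self_iff.mpr fun j hj => ?_
  have hmem : j ∈ Finset.Ico 1 N ↔ N - j ∈ Finset.Ico 1 N := by
    simp only [Finset.mem_Ico]; omega
  simp only [coeff_deviation, hmem, reflect_eq_self_iff.mp hR j hj]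

theorem coeff_sub_C_mul_deviation (δ t : ℝ) {j : ℕ} (hj : j ∈ Finset.Ico 1 N) :
    (R - C t * deviation N δ R).coeff j + δ - R.coeff N
      = (1 - t) * (R.coeff j + δ - R.coeff N) := by
  rw [coeff_sub, coeff_C_mul, coeff_deviation, if_pos hj]
  ring

theorem coeff_sub_C_mul_deviation_self (δ t : ℝ) :
    (R - C t * deviation N δ R).coeff N = R.coeff N := by
  simp [coeff_deviation]

theorem natDegree_sub_C_mul_deviation_le (hdeg : R.natDegree ≤ N) (δ t : ℝ) :
    (R - C t * deviation N δ R).natDegree ≤ N :=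
  (natDegree_sub_le _ _).trans <|
    max_le hdeg ((natDegree_C_mul_le _ _).trans (natDegree_deviation_le δ))

theorem norm_eq_one_of_mem_roots_sub_C_mul_deviation (hN : 0 < N) (hdeg : R.natDegree ≤ N)
    (hR : reflect N R = R) (hc : R.coeff N ≠ 0) {δ : ℝ} (hδ₁ : 0 ≤ R.coeff N * δ)
    (hδ₂ : |δ| ≤ |R.coeff N|)
    (hδ₃ : ∑ j ∈ Finset.Ico 1 N, |R.coeff j + δ - R.coeff N| ≤ |R.coeff N + δ|)
    {t : ℝ} (ht₀ : 0 < t) (ht₁ : t ≤ 1) :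
    ∀ z ∈ ((R - C t * deviation N δ R).map (algebraMap ℝ ℂ)).roots, ‖z‖ = 1 := by
  have hcδ : 0 < |R.coeff N + δ| := abs_pos.mpr fun h => by
    rw [eq_neg_of_add_eq_zero_right h, mul_neg] at hδ₁
    exact (mul_self_pos.mpr hc).not_ge (neg_nonneg.mp hδ₁)
  refine norm_eq_one_of_mem_roots_of_sum_lt hN (natDegree_sub_C_mul_deviation_le hdeg δ t)
    (by rw [reflect_sub, reflect_C_mul, reflect_deviation hR, hR]) (δ := δ) ?_ ?_ ?_ <;>
    rw [coeff_sub_C_mul_deviation_self]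
  · exact hδ₁
  · exact hδ₂
  · rw [Finset.sum_congr rfl fun j hj => by rw [coeff_sub_C_mul_deviation δ t hj]]
    simp only [abs_mul, abs_of_nonneg (sub_nonneg.mpr ht₁), ← Finset.mul_sum]
    nlinarith

theorem abs_coeff_mul_pow_le_of_aeval_eq_zero (hN : 0 < N) (hdeg : R.natDegree ≤ N)
    (hR : reflect N R = R) (hc : R.coeff N ≠ 0) {δ : ℝ} (hδ₁ : 0 ≤ R.coeff N * δ)
    (hδ₂ : |δ| ≤ |R.coeff N|)
    (hδ₃ : ∑ j ∈ Finset.Ico 1 N, |R.coeff j + δ - R.coeff N| ≤ |R.coeff N + δ|)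
    {t : ℝ} (ht₀ : 0 < t) (ht₁ : t ≤ 1)
    {z : ℂ} (hz : aeval z R = 0) :
    |R.coeff N| * |‖z‖ - 1| ^ N ≤ t * ‖aeval z (deviation N δ R)‖ := by
  set Q := (R - C t * deviation N δ R).map (algebraMap ℝ ℂ)
  have hQN : Q.coeff N = R.coeff N := by
    rw [coeff_map, coeff_sub_C_mul_deviation_self]; rfl
  have hQdeg : Q.natDegree = N := natDegree_eq_of_le_of_coeff_ne_zero
    (natDegree_map_le.trans (natDegree_sub_C_mul_deviation_le hdeg δ t))
    (by rw [hQN]; exact_mod_cast hc)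
  have := norm_leadingCoeff_mul_le_norm_eval
    (norm_eq_one_of_mem_roots_sub_C_mul_deviation hN hdeg hR hc hδ₁ hδ₂ hδ₃ ht₀ ht₁) z
  rwa [leadingCoeff, hQdeg, hQN, norm_real, Real.norm_eq_abs, eval_map_algebraMap, map_sub,
    map_mul, aeval_C, hz, zero_sub, norm_neg, norm_mul, Complex.coe_algebraMap, norm_real,
    Real.norm_eq_abs, abs_of_pos ht₀] at this

end Polynomial

open Filter Topology in
theorem reciprocal_poly_zeros_on_unit_circle (N : ℕ) (hN : 2 ≤ N) (P : Polynomial ℝ)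
    (hdeg : P.natDegree = N) (hcN : P.coeff N ≠ 0)
    (hrecip : ∀ j ≤ N, P.coeff j = P.coeff (N - j))
    (δ : ℝ) (hδ1 : P.coeff N * δ ≥ 0) (hδ2 : |P.coeff N| ≥ |δ|)
    (hδ3 : |P.coeff N + δ| ≥ ∑ j ∈ Finset.Ico 1 N, |P.coeff j + δ - P.coeff N|) :
    ∀ z : ℂ, Polynomial.aeval z P = 0 → ‖z‖ = 1 := by
  intro z hz
  have hbound (t : ℝ) (ht : t ∈ Ioc 0 1) :
      |P.coeff N| * |‖z‖ - 1| ^ N ≤ t * ‖aeval z (deviation N δ P)‖ :=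
    abs_coeff_mul_pow_le_of_aeval_eq_zero (by omega) hdeg.le (reflect_eq_self_iff.mpr hrecip)
      hcN hδ1 hδ2 hδ3 ht.1 ht.2 hz
  have hlim : Tendsto (fun t : ℝ => t * ‖aeval z (deviation N δ P)‖) (𝓝[>] 0) (𝓝 0) :=
    ((continuous_mul_const _).tendsto' 0 0 (zero_mul _)).mono_left nhdsWithin_le_nhds
  have hpow : |‖z‖ - 1| ^ N = 0 := le_antisymm
    (nonpos_of_mul_nonpos_right (ge_of_tendsto hlim (eventually_of_mem (Ioc_mem_nhdsGT one_pos)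
      hbound)) (abs_pos.mpr hcN)) (by positivity)
  rwa [pow_eq_zero_iff (by omega), abs_eq_zero, sub_eq_zero] at hpow
end

section
/- Let ρ ≥ 5 be a prime, b ≥ 1 an integer, 2g = ρ^{b−1}(ρ−1), and let q ≥ 4 be a real number. Let A be a real number with 0 ≤ A ≤ 2q^{ρ^{b−1}/2}(q^{ρ^{b−1}/2} − 1). Then 2q^g − 2·Σ_{u=1}^{(ρ−3)/2} q^{(2g − u ρ^{b−1})/2} − A·q^{g/2} ≥ 0. -/
/-! Put `m = ρ^(b-1)`, `ρ = 2k + 1` and `t = q^(m/2) ≥ 2`; then `g = k m` and every power of `q`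
in the claim is an integer power of `t`, so it reads
`2 t^(2k) - 2 (t^(2k-1) + ⋯ + t^(k+1)) - A t^k ≥ 0`.
Bounding `A ≤ 2 t (t - 1)` reduces this to `t^(k+1) + ⋯ + t^(2k-1) + t^(k+2) - t^(k+1) ≤ t^(2k)`,
which holds because for `t ≥ 2` a geometric sum `t^a + ⋯ + t^(n-1)` is at most `t^n - t^a`. -/

open Finset

lemma geom_sum_Ico_le_pow_sub_pow {t : ℝ} (ht : 2 ≤ t) {a n : ℕ} (han : a ≤ n) :
    ∑ i ∈ Ico a n, t ^ i ≤ t ^ n - t ^ a := by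
  rw [geom_sum_Ico (by linarith) han]
  exact div_le_self (sub_nonneg.2 (pow_le_pow_right₀ (by linarith) han)) (by linarith)

lemma sum_Icc_pow_two_mul_sub_add_le {t : ℝ} (ht : 2 ≤ t) {k : ℕ} (hk : 2 ≤ k) :
    ∑ u ∈ Icc 1 (k - 1), t ^ (2 * k - u) + t * (t - 1) * t ^ k ≤ t ^ (2 * k) := by
  have hreflect : ∑ u ∈ Icc 1 (k - 1), t ^ (2 * k - u) = ∑ j ∈ Ico (k + 1) (2 * k), t ^ j := by
    rw [← Ico_add_one_right_eq_Icc, Nat.sub_add_cancel (by omega),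
      sum_Ico_reflect (fun j ↦ t ^ j) 1 (by omega : k ≤ 2 * k + 1)]
    congr 2; omega
  rw [hreflect, sum_eq_sum_Ico_succ_bot (by omega)]
  have htail := geom_sum_Ico_le_pow_sub_pow ht (by omega : k + 1 + 1 ≤ 2 * k)
  have : t * (t - 1) * t ^ k = t ^ (k + 1 + 1) - t ^ (k + 1) := by ring
  linarith

lemma two_mul_pow_sub_sum_sub_mul_pow_nonneg {t A : ℝ} (ht : 2 ≤ t) {k : ℕ} (hk : 2 ≤ k)
    (hA : A ≤ 2 * t * (t - 1)) :
    0 ≤ 2 * t ^ (2 * k) - 2 * ∑ u ∈ Icc 1 (k - 1), t ^ (2 * k - u) - A * t ^ k := by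
  have hAt : A * t ^ k ≤ 2 * t * (t - 1) * t ^ k :=
    mul_le_mul_of_nonneg_right hA (pow_nonneg (by linarith) k)
  linarith [sum_Icc_pow_two_mul_sub_add_le ht hk]

lemma rpow_natCast_mul_div_two {q : ℝ} (hq : 0 ≤ q) (n m : ℕ) :
    q ^ (((n * m : ℕ) : ℝ) / 2) = (q ^ ((m : ℝ) / 2)) ^ n := by
  rw [← Real.rpow_natCast, ← Real.rpow_mul hq]
  push_cast
  ring_nf

lemma two_le_rpow_natCast_div_two {q : ℝ} (hq : 4 ≤ q) {m : ℕ} (hm : 1 ≤ m) :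
    2 ≤ q ^ ((m : ℝ) / 2) := by
  have hsq : (q ^ ((m : ℝ) / 2)) ^ 2 = q ^ m := by
    rw [← rpow_natCast_mul_div_two (by linarith), ← Real.rpow_natCast]
    push_cast
    ring_nf
  have : q ≤ q ^ m := le_self_pow₀ (by linarith) (by omega)
  nlinarith [Real.rpow_nonneg (by linarith : (0 : ℝ) ≤ q) ((m : ℝ) / 2)]

theorem key_inequality_general (ρ b g : ℕ) (hρ : ρ.Prime) (hρ5 : 5 ≤ ρ)
    (hg : 2 * g = ρ ^ (b - 1) * (ρ - 1)) (q : ℝ) (hq : 4 ≤ q) (A : ℝ)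
    (hA : A ≤ 2 * q ^ ((ρ ^ (b - 1) : ℝ) / 2) * (q ^ ((ρ ^ (b - 1) : ℝ) / 2) - 1)) :
    2 * q ^ (g : ℕ) -
      2 * ∑ u ∈ Finset.Icc 1 ((ρ - 3) / 2), q ^ (((2 * g - u * ρ ^ (b - 1) : ℕ) : ℝ) / 2) -
      A * q ^ ((g : ℝ) / 2) ≥ 0 := by
  set m := ρ ^ (b - 1)
  obtain ⟨k, hk⟩ : Odd ρ := hρ.odd_of_ne_two (by omega)
  have hgk : g = k * m := by
    rw [hk, Nat.add_sub_cancel, mul_comm m, mul_assoc] at hg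
    omega
  have hq0 : 0 ≤ q := by linarith
  have hghalf : q ^ ((g : ℝ) / 2) = (q ^ ((m : ℝ) / 2)) ^ k := by
    rw [← rpow_natCast_mul_div_two hq0, hgk]
  have hgsq : q ^ g = (q ^ ((g : ℝ) / 2)) ^ 2 := by
    rw [← Real.rpow_natCast, ← Real.rpow_natCast, ← Real.rpow_mul hq0]
    ring_nf
  have hsum : ∀ u, q ^ (((2 * g - u * m : ℕ) : ℝ) / 2) = (q ^ ((m : ℝ) / 2)) ^ (2 * k - u) := by
    intro u
    rw [← rpow_natCast_mul_div_two hq0, Nat.sub_mul, hgk, mul_assoc]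
  rw [hgsq, hghalf, sum_congr rfl fun u _ ↦ hsum u, ← pow_mul, mul_comm k 2,
    show (ρ - 3) / 2 = k - 1 by omega]
  refine two_mul_pow_sub_sum_sub_mul_pow_nonneg
    (two_le_rpow_natCast_div_two hq (Nat.one_le_pow _ _ (by omega))) (by omega) ?_
  exact_mod_cast hA

theorem key_inequality (ρ b g : ℕ) (hρ : ρ.Prime) (hρ5 : 5 ≤ ρ) (hb : 1 ≤ b)
    (hg : 2 * g = ρ ^ (b - 1) * (ρ - 1)) (q : ℝ) (hq : 4 ≤ q) (A : ℝ) (hA0 : 0 ≤ A)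
    (hA : A ≤ 2 * q ^ ((ρ ^ (b - 1) : ℝ) / 2) * (q ^ ((ρ ^ (b - 1) : ℝ) / 2) - 1)) :
    2 * q ^ (g : ℕ) -
      2 * ∑ u ∈ Finset.Icc 1 ((ρ - 3) / 2), q ^ (((2 * g - u * ρ ^ (b - 1) : ℕ) : ℝ) / 2) -
      A * q ^ ((g : ℝ) / 2) ≥ 0 :=
  key_inequality_general ρ b g hρ hρ5 hg q hq A hA
end

section
/- Let ρ ≥ 5 be a prime, b ≥ 1 an integer, 2g = ρ^{b−1}(ρ−1), let q ≥ 4 be a real number, and let a_g be a real number with 0 ≤ a_g ≤ 2q^{ρ^{b−1}/2}(q^{ρ^{b−1}/2} − 1). Then every complex zero of the polynomial f(t) = t^{2g} + a_g t^g + q^g + Σ_{u=1}^{(ρ−3)/2} (t^{2g − u ρ^{b−1}} + q^{g − u ρ^{b−1}} t^{u ρ^{b−1}}) has modulus q^{1/2}. -/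
/-!
Put `p = ρ^(b-1)`, `m = (ρ-1)/2` and `Q = q^(p/2)`, so that `f(t) = P(t^p)` for a polynomial `P`
of degree `2m` whose coefficients are symmetric up to powers of `Q²`. For `s = Q e^{iθ}` this gives
`s^(-m) P(s) = a + ∑_{k=1}^m 2 Q^k cos(kθ)`, a real trigonometric polynomial. At `θ = jπ/m` its
top term equals `±2Q^m`, and since `Q ≥ 2` and `0 ≤ a ≤ 2Q(Q-1)` it fixes the sign `(-1)^j` of
the whole sum. The intermediate value theorem then yields `2m` distinct zeros of `P` on the circle
`|s| = Q`, which are all of its zeros. Hence `|t|^p = Q` for every zero `t` of `f`.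
-/

open Polynomial Finset Real

noncomputable def palindromicPoly {R : Type*} [CommSemiring R] (a c : R) (m : ℕ) : R[X] :=
  X ^ (2 * m) + C a * X ^ m + C (c ^ m) +
    ∑ u ∈ Icc 1 (m - 1), (X ^ (2 * m - u) + C (c ^ (m - u)) * X ^ u)

theorem eval_palindromicPoly_eq_sum_range {R : Type*} [CommSemiring R] (a c s : R) {m : ℕ}
    (hm : 0 < m) :
    (palindromicPoly a c m).eval s =
      a * s ^ m + ∑ u ∈ range m, (s ^ (2 * m - u) + c ^ (m - u) * s ^ u) := by
  obtain ⟨n, rfl⟩ : ∃ n, m = n + 1 := ⟨m - 1, by omega⟩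
  rw [palindromicPoly, Nat.add_sub_cancel, ← Ico_add_one_right_eq_Icc, sum_Ico_eq_sum_range,
    Nat.add_sub_cancel, sum_range_succ']
  simp only [eval_add, eval_mul, eval_pow, eval_X, eval_C, eval_finsetSum, add_comm 1,
    Nat.sub_zero, pow_zero, mul_one]
  ring

theorem eval_palindromicPoly {K : Type*} [Field K] (a c s : K) (hs : s ≠ 0) {m : ℕ}
    (hm : 0 < m) :
    (palindromicPoly a c m).eval s =
      s ^ m * (a + ∑ j ∈ range m, (s ^ (j + 1) + (c / s) ^ (j + 1))) := by
  have hterm : ∀ j < m, s ^ m * (s ^ (j + 1) + (c / s) ^ (j + 1)) =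
      s ^ (2 * m - (m - 1 - j)) + c ^ (m - (m - 1 - j)) * s ^ (m - 1 - j) := by
    intro j hj
    obtain ⟨k, rfl⟩ : ∃ k, m = j + 1 + k := ⟨m - (j + 1), by omega⟩
    rw [show 2 * (j + 1 + k) - (j + 1 + k - 1 - j) = j + 1 + k + (j + 1) by omega,
      show j + 1 + k - (j + 1 + k - 1 - j) = j + 1 by omega,
      show j + 1 + k - 1 - j = k by omega, div_pow]
    field_simp
    ring
  rw [eval_palindromicPoly_eq_sum_range a c s hm, mul_add, mul_comm, mul_sum,
    ← sum_range_reflect _ m]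
  exact congrArg _ (sum_congr rfl fun j hj => (hterm j (mem_range.mp hj)).symm)

noncomputable def trigSum (a Q : ℝ) (m : ℕ) (θ : ℝ) : ℝ :=
  a + ∑ j ∈ range m, 2 * Q ^ (j + 1) * cos ((j + 1) * θ)

theorem continuous_trigSum (a Q : ℝ) (m : ℕ) : Continuous (trigSum a Q m) := by
  unfold trigSum; fun_prop

theorem geom_sum_le_pow_sub_one {Q : ℝ} (hQ : 2 ≤ Q) (n : ℕ) :
    ∑ i ∈ range n, Q ^ i ≤ Q ^ n - 1 := by
  induction n with
  | zero => simp
  | succ n ih =>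
    rw [sum_range_succ, pow_succ]
    nlinarith [one_le_pow₀ (by linarith : 1 ≤ Q) (n := n)]

theorem abs_sum_pow_mul_cos_le {Q : ℝ} (hQ : 2 ≤ Q) (n : ℕ) (φ : ℕ → ℝ) :
    |∑ i ∈ range n, 2 * Q ^ (i + 2) * cos (φ i)| ≤ 2 * (Q ^ (n + 2) - Q ^ 2) :=
  calc |∑ i ∈ range n, 2 * Q ^ (i + 2) * cos (φ i)|
      ≤ ∑ i ∈ range n, 2 * Q ^ (i + 2) := by
        refine (abs_sum_le_sum_abs _ _).trans (sum_le_sum fun i _ => ?_)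
        rw [abs_mul, abs_of_nonneg (by positivity)]
        exact mul_le_of_le_one_right (by positivity) (abs_cos_le_one _)
    _ = 2 * Q ^ 2 * ∑ i ∈ range n, Q ^ i := by
        rw [mul_sum]; exact sum_congr rfl fun i _ => by ring
    _ ≤ 2 * Q ^ 2 * (Q ^ n - 1) := by gcongr; exact geom_sum_le_pow_sub_one hQ n
    _ = 2 * (Q ^ (n + 2) - Q ^ 2) := by ring

theorem cos_ne_one_of_odd {j m : ℕ} (hj : Odd j) (hm : m ≠ 0) : cos (j * π / m) ≠ 1 := by
  rw [Ne, cos_eq_one_iff]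
  rintro ⟨k, hk⟩
  have hj2 : (j : ℤ) = 2 * (k * m) := by
    have : (j : ℝ) = 2 * (k * m) := by field_simp at hk; linarith [pi_pos]
    exact_mod_cast this
  exact Int.not_even_iff_odd.mpr (Int.odd_coe_nat j |>.mpr hj) ⟨k * m, by rw [hj2]; ring⟩

theorem neg_one_pow_mul_trigSum_pos {a Q : ℝ} {m : ℕ} (hm : 2 ≤ m) (hQ : 2 ≤ Q) (ha0 : 0 ≤ a)
    (ha : a ≤ 2 * Q * (Q - 1)) (j : ℕ) : 0 < (-1) ^ j * trigSum a Q m (j * π / m) := by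
  obtain ⟨n, rfl⟩ : ∃ n, m = n + 2 := ⟨m - 2, by omega⟩
  set θ : ℝ := j * π / ↑(n + 2)
  have hsplit : trigSum a Q (n + 2) θ = a + 2 * Q * cos θ +
      ∑ i ∈ range n, 2 * Q ^ (i + 2) * cos ((i + 2 : ℝ) * θ) +
      2 * Q ^ (n + 2) * cos ((n + 2 : ℝ) * θ) := by
    rw [trigSum, sum_range_succ, sum_range_succ']
    push_cast
    simp only [add_assoc, one_add_one_eq_two, zero_add, pow_one, one_mul]
    ring
  have hM := abs_le.mp (abs_sum_pow_mul_cos_le hQ n fun i => (i + 2 : ℝ) * θ)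
  have hlast : cos ((n + 2 : ℝ) * θ) = (-1) ^ j := by
    rw [show (n + 2 : ℝ) * θ = j * π by simp only [θ]; push_cast; field_simp]
    simpa using cos_nat_mul_pi j
  have hQ2 : Q ^ 2 ≤ Q ^ (n + 2) := pow_le_pow_right₀ (by linarith) (by omega)
  rw [hsplit, hlast]
  rcases j.even_or_odd with he | ho
  · rw [he.neg_one_pow]
    nlinarith [neg_one_le_cos θ]
  · have hcos : cos θ < 1 := (cos_le_one θ).lt_of_ne (cos_ne_one_of_odd ho (by omega))
    rw [ho.neg_one_pow]
    nlinarith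

theorem natDegree_palindromicPoly_le {R : Type*} [CommSemiring R] (a c : R) (m : ℕ) :
    (palindromicPoly a c m).natDegree ≤ 2 * m := by
  unfold palindromicPoly
  refine natDegree_add_le_of_degree_le (natDegree_add_le_of_degree_le
    (natDegree_add_le_of_degree_le (natDegree_X_pow_le _) ?_) ?_) ?_
  · exact (natDegree_C_mul_X_pow_le a m).trans (by omega)
  · exact (natDegree_C _).trans_le (Nat.zero_le _)
  · refine natDegree_sum_le_of_forall_le _ _ fun u hu => natDegree_add_le_of_degree_le
      ((natDegree_X_pow_le _).trans (Nat.sub_le _ _)) ((natDegree_C_mul_X_pow_le _ u).trans ?_)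
    have := (mem_Icc.mp hu).2
    omega

theorem map_palindromicPoly {R S : Type*} [CommSemiring R] [CommSemiring S] (f : R →+* S)
    (a c : R) (m : ℕ) : (palindromicPoly a c m).map f = palindromicPoly (f a) (f c) m := by
  simp [palindromicPoly, Polynomial.map_sum]

theorem expand_palindromicPoly {R : Type*} [CommSemiring R] (a q : R) (p m : ℕ) :
    expand R p (palindromicPoly a (q ^ p) m) =
      X ^ (2 * (p * m)) + C a * X ^ (p * m) + C (q ^ (p * m)) +
        ∑ u ∈ Icc 1 (m - 1),
          (X ^ (2 * (p * m) - u * p) + C (q ^ (p * m - u * p)) * X ^ (u * p)) := by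
  simp only [palindromicPoly, map_add, map_mul, map_pow, map_sum, expand_X, expand_C, ← pow_mul]
  congr 1
  · ring_nf
  · refine sum_congr rfl fun u _ => ?_
    rw [Nat.mul_sub, Nat.mul_sub]
    ring_nf

theorem conj_eq_sq_div (Q θ : ℝ) :
    starRingEnd ℂ (Q * Complex.exp (θ * Complex.I)) =
      (Q : ℂ) ^ 2 / (Q * Complex.exp (θ * Complex.I)) := by
  rw [map_mul, Complex.conj_ofReal, ← Complex.exp_conj, map_mul, Complex.conj_ofReal,
    Complex.conj_I, mul_neg, Complex.exp_neg]
  field_simp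

theorem pow_add_conj_pow (Q θ : ℝ) (n : ℕ) :
    (Q * Complex.exp (θ * Complex.I)) ^ n + starRingEnd ℂ (Q * Complex.exp (θ * Complex.I)) ^ n =
      ((2 * Q ^ n * cos (n * θ) : ℝ) : ℂ) := by
  rw [← map_pow, Complex.add_conj, mul_pow, ← Complex.exp_nat_mul, ← mul_assoc,
    ← Complex.ofReal_pow, ← Complex.ofReal_natCast, ← Complex.ofReal_mul, Complex.re_ofReal_mul,
    Complex.exp_ofReal_mul_I_re]
  push_cast
  ring

theorem eval_palindromicPoly_circle (a Q θ : ℝ) (hQ : Q ≠ 0) {m : ℕ} (hm : 0 < m) :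
    (palindromicPoly (a : ℂ) ((Q : ℂ) ^ 2) m).eval (Q * Complex.exp (θ * Complex.I)) =
      (Q * Complex.exp (θ * Complex.I)) ^ m * trigSum a Q m θ := by
  rw [eval_palindromicPoly _ _ _ (by simp [hQ, Complex.exp_ne_zero]) hm, ← conj_eq_sq_div]
  simp only [pow_add_conj_pow, trigSum]
  push_cast
  rfl

theorem Polynomial.mem_of_isRoot_of_natDegree_le_card {R : Type*} [CommRing R] [IsDomain R]
    [DecidableEq R] {p : R[X]} (hp : p ≠ 0) {S : Finset R} (hS : ∀ x ∈ S, p.IsRoot x)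
    (hcard : p.natDegree ≤ S.card) {y : R} (hy : p.IsRoot y) : y ∈ S := by
  have hsub : S ⊆ p.roots.toFinset := fun x hx => by
    rw [Multiset.mem_toFinset, mem_roots hp]; exact hS x hx
  have hle : p.roots.toFinset.card ≤ S.card :=
    (Multiset.toFinset_card_le _).trans ((card_roots' p).trans hcard)
  rw [eq_of_subset_of_card_le hsub hle, Multiset.mem_toFinset, mem_roots hp]
  exact hy

theorem exists_trigSum_eq_zero {a Q : ℝ} {m : ℕ} (hm : 2 ≤ m) (hQ : 2 ≤ Q) (ha0 : 0 ≤ a)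
    (ha : a ≤ 2 * Q * (Q - 1)) (j : ℕ) :
    ∃ θ ∈ Set.Ioo (j * π / m) ((j + 1) * π / m), trigSum a Q m θ = 0 := by
  have hlt : j * π / m < (j + 1) * π / m := by gcongr; linarith
  have hleft := neg_one_pow_mul_trigSum_pos hm hQ ha0 ha j
  have hright := neg_one_pow_mul_trigSum_pos hm hQ ha0 ha (j + 1)
  rw [pow_succ, mul_neg_one, neg_mul, neg_pos] at hright
  push_cast at hright
  obtain ⟨θ, hθ, hzero⟩ := intermediate_value_Ioo' hlt.le
    ((continuous_const.mul (continuous_trigSum a Q m)).continuousOn) ⟨hright, hleft⟩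
  exact ⟨θ, hθ, (mul_eq_zero.mp hzero).resolve_left (pow_ne_zero _ (by norm_num))⟩

theorem norm_eq_of_isRoot_palindromicPoly {a Q : ℝ} {m : ℕ} (hm : 2 ≤ m) (hQ : 2 ≤ Q)
    (ha0 : 0 ≤ a) (ha : a ≤ 2 * Q * (Q - 1)) {s : ℂ}
    (hs : (palindromicPoly (a : ℂ) ((Q : ℂ) ^ 2) m).IsRoot s) : ‖s‖ = Q := by
  classical
  have hQ0 : Q ≠ 0 := by positivity
  have hm0 : (0 : ℝ) < m := by positivity
  choose θ hθ hzero using exists_trigSum_eq_zero hm hQ ha0 ha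
  have hmono : StrictMono θ := strictMono_nat_of_lt_succ fun j =>
    (hθ j).2.trans (by simpa using (hθ (j + 1)).1)
  have hθ_mem : ∀ j ∈ range (2 * m), θ j ∈ Set.Ico 0 (2 * π) := fun j hj => by
    have hj : (j : ℝ) + 1 ≤ 2 * m := by exact_mod_cast mem_range.mp hj
    refine ⟨(div_nonneg (by positivity) hm0.le).trans (hθ j).1.le, (hθ j).2.trans_le ?_⟩
    rw [div_le_iff₀ hm0]
    nlinarith [pi_pos]
  set S := (range (2 * m)).image fun j => (Q : ℂ) * Complex.exp (θ j * Complex.I)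
  have hcard : S.card = 2 * m := by
    rw [card_image_of_injOn, card_range]
    intro j hj k hk hjk
    have hexp : Circle.exp (θ j) = Circle.exp (θ k) := Subtype.ext <|
      mul_left_cancel₀ (Complex.ofReal_ne_zero.mpr hQ0) hjk
    exact hmono.injective
      (Circle.exp_injOn_Ico (by rw [sub_zero]) (hθ_mem j hj) (hθ_mem k hk) hexp)
  have hroots : ∀ x ∈ S, (palindromicPoly (a : ℂ) ((Q : ℂ) ^ 2) m).IsRoot x := by
    simp only [S, mem_image]
    rintro _ ⟨j, -, rfl⟩
    rw [IsRoot, eval_palindromicPoly_circle a Q (θ j) hQ0 (by omega), hzero j,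
      Complex.ofReal_zero, mul_zero]
  have hne : palindromicPoly (a : ℂ) ((Q : ℂ) ^ 2) m ≠ 0 := by
    intro h
    have hpos : 0 < trigSum a Q m 0 := by simpa using neg_one_pow_mul_trigSum_pos hm hQ ha0 ha 0
    have h0 := eval_palindromicPoly_circle a Q 0 hQ0 (m := m) (by omega)
    rw [h, eval_zero] at h0
    simp [hQ0, hpos.ne'] at h0
  obtain ⟨j, -, rfl⟩ := mem_image.mp (Polynomial.mem_of_isRoot_of_natDegree_le_card hne hroots
    (hcard ▸ natDegree_palindromicPoly_le _ _ m) hs)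
  simp [Complex.norm_exp_ofReal_mul_I, abs_of_pos (by linarith : (0 : ℝ) < Q)]

theorem rpow_half_natCast_eq_sqrt_pow {q : ℝ} (hq : 0 ≤ q) (n : ℕ) :
    q ^ ((n : ℝ) / 2) = √q ^ n := by
  rw [div_eq_inv_mul, Real.rpow_mul hq, Real.rpow_natCast, ← one_div, ← Real.sqrt_eq_rpow]

theorem zeros_have_modulus_sqrt_q_general (ρ b g : ℕ) (hρ : ρ.Prime) (hρ5 : 5 ≤ ρ)
    (hg : 2 * g = ρ ^ (b - 1) * (ρ - 1)) (q : ℝ) (hq : 4 ≤ q) (a : ℝ) (ha0 : 0 ≤ a)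
    (ha : a ≤ 2 * q ^ ((ρ ^ (b - 1) : ℝ) / 2) * (q ^ ((ρ ^ (b - 1) : ℝ) / 2) - 1)) :
    ∀ z : ℂ,
      Polynomial.aeval z
        ((X ^ (2 * g) + C a * X ^ g + C (q ^ g) +
          ∑ u ∈ Finset.Icc 1 ((ρ - 3) / 2),
            (X ^ (2 * g - u * ρ ^ (b - 1)) +
              C (q ^ (g - u * ρ ^ (b - 1))) * X ^ (u * ρ ^ (b - 1)))) : Polynomial ℝ) = 0 →
      ‖z‖ = Real.sqrt q := by
  intro z hz
  obtain ⟨m, rfl⟩ := hρ.odd_of_ne_two (by omega)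
  set p := (2 * m + 1) ^ (b - 1)
  obtain rfl : g = p * m := by rw [Nat.add_sub_cancel, mul_comm 2 m, ← mul_assoc] at hg; omega
  have hp : p ≠ 0 := by positivity
  set Q := √q ^ p
  have hQ : 2 ≤ Q := by
    calc 2 ≤ √q := Real.le_sqrt_of_sq_le (by linarith)
      _ ≤ Q := le_self_pow₀ (by linarith [Real.le_sqrt_of_sq_le (by linarith : 2 ^ 2 ≤ q)]) hp
  have hQsq : Q ^ 2 = q ^ p := by rw [← pow_mul, mul_comm, pow_mul, Real.sq_sqrt (by linarith)]
  have haQ : a ≤ 2 * Q * (Q - 1) := by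
    rwa [← Nat.cast_pow, rpow_half_natCast_eq_sqrt_pow (by linarith)] at ha
  rw [show (2 * m + 1 - 3) / 2 = m - 1 by omega, ← expand_palindromicPoly, expand_aeval,
    aeval_def, eval₂_eq_eval_map, map_palindromicPoly, ← hQsq] at hz
  have hnorm :=
    norm_eq_of_isRoot_palindromicPoly (m := m) (by omega) hQ ha0 haQ (by simpa using hz)
  rwa [norm_pow, pow_left_inj₀ (norm_nonneg z) (Real.sqrt_nonneg q) hp] at hnorm

theorem zeros_have_modulus_sqrt_q (ρ b g : ℕ) (hρ : ρ.Prime) (hρ5 : 5 ≤ ρ) (hb : 1 ≤ b)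
    (hg : 2 * g = ρ ^ (b - 1) * (ρ - 1)) (q : ℝ) (hq : 4 ≤ q) (a : ℝ) (ha0 : 0 ≤ a)
    (ha : a ≤ 2 * q ^ ((ρ ^ (b - 1) : ℝ) / 2) * (q ^ ((ρ ^ (b - 1) : ℝ) / 2) - 1)) :
    ∀ z : ℂ,
      Polynomial.aeval z
        ((X ^ (2 * g) + C a * X ^ g + C (q ^ g) +
          ∑ u ∈ Finset.Icc 1 ((ρ - 3) / 2),
            (X ^ (2 * g - u * ρ ^ (b - 1)) +
              C (q ^ (g - u * ρ ^ (b - 1))) * X ^ (u * ρ ^ (b - 1)))) : Polynomial ℝ) = 0 →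
      ‖z‖ = Real.sqrt q :=
  zeros_have_modulus_sqrt_q_general ρ b g hρ hρ5 hg q hq a ha0 ha
end

section
/- Let ρ ≥ 5 be a prime, b ≥ 1 an integer, 2g = ρ^{b−1}(ρ−1), r a prime that is a primitive root modulo ρ², and let q ≥ 4. Let m ≥ 0 be an integer and set a_g = mr + 1. Then the integer polynomial f(t) = t^{2g} + a_g t^g + q^g + Σ_{u=1}^{(ρ−3)/2} (t^{2g − u ρ^{b−1}} + q^{g − u ρ^{b−1}} t^{u ρ^{b−1}}) is congruent modulo r to Φ_{ρ^b}(t) when q ≡ 1 (mod r), and is therefore irreducible over ℚ. -/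
/-!
Modulo `r` we have `a_g = m r + 1 ≡ 1` and every power of `q` is `≡ 1`, so `f` reduces to the
palindromic sum `∑_{i < ρ} t^(i ρ^(b-1)) = Φ_{ρ^b}(t)`.

A primitive root `r` modulo `ρ²` is a primitive root modulo every `ρ^b`: writing
`r^(ρ-1) = 1 + ρ a`, the generator hypothesis forces `ρ ∤ a`, hence `1 + ρ a` has order
`ρ^(b-1)` modulo `ρ^b`. Over `𝔽_r` every irreducible factor of `Φ_{ρ^b}` has degree the order of
`r` modulo `ρ^b`, which is now `φ(ρ^b) = deg Φ_{ρ^b}`, so `Φ_{ρ^b}` is irreducible over `𝔽_r`.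
Since `f` is monic, irreducibility of its reduction lifts to `ℤ`, and Gauss's lemma passes it
to `ℚ`.
-/

open Polynomial Finset
open scoped Nat

theorem sum_range_succ_eq_add_sum_Icc {M : Type*} [AddCommMonoid M] (f : ℕ → M) (n : ℕ) :
    ∑ i ∈ range (n + 1), f i = f 0 + ∑ i ∈ Icc 1 n, f i := by
  rw [sum_range_eq_add_Ico f n.add_one_pos, Finset.Ico_add_one_right_eq_Icc]

theorem geom_sum_range_eq_palindrome {R : Type*} [Semiring R] (x : R) (s : ℕ) :
    ∑ i ∈ range (2 * s + 3), x ^ i =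
      x ^ (2 * s + 2) + x ^ (s + 1) + 1 + ∑ u ∈ Icc 1 s, (x ^ (2 * s + 2 - u) + x ^ u) := by
  have hlow := sum_range_succ_eq_add_sum_Icc (x ^ ·) s
  have hhigh := sum_range_succ_eq_add_sum_Icc (fun i => x ^ (2 * s + 2 - i)) s
  rw [← sum_range_reflect, Nat.sub_zero] at hhigh
  have hreflect : ∑ j ∈ range (s + 1), x ^ (s + 1 + 1 + j) =
      ∑ j ∈ range (s + 1), x ^ (2 * s + 2 - (s + 1 - 1 - j)) :=
    sum_congr rfl fun j hj => by rw [mem_range] at hj; congr 1; omega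
  rw [show 2 * s + 3 = s + 1 + 1 + (s + 1) by ring, sum_range_add, sum_range_succ, hlow,
    hreflect, hhigh, sum_add_distrib, pow_zero]
  abel

section WeilPoly

variable {R S : Type*} [CommRing R] [CommRing S]

/-- The paper's `f` is `weilPoly g ρ^(b-1) ((ρ-3)/2) a_g q`: the coefficients of `t^(u k)` and
`t^(2g - u k)` differ by the factor `q^(g - u k)`, as in a Weil `q`-polynomial. -/
noncomputable def weilPoly (g k s : ℕ) (a q : R) : R[X] :=
  X ^ (2 * g) + C a * X ^ g + C (q ^ g) +
    ∑ u ∈ Icc 1 s, (X ^ (2 * g - u * k) + C (q ^ (g - u * k)) * X ^ (u * k))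

theorem weilPoly_map (f : R →+* S) (g k s : ℕ) (a q : R) :
    (weilPoly g k s a q).map f = weilPoly g k s (f a) (f q) := by
  simp only [weilPoly, Polynomial.map_add, Polynomial.map_sum, Polynomial.map_mul,
    Polynomial.map_pow, map_X, map_C, map_pow]

theorem weilPoly_one_one (k s : ℕ) :
    weilPoly ((s + 1) * k) k s (1 : R) 1 = ∑ i ∈ range (2 * s + 3), (X ^ k) ^ i := by
  rw [geom_sum_range_eq_palindrome, weilPoly]
  simp only [one_pow, C_1, one_mul, ← pow_mul]
  congr 3
  · ring
  · ring
  · funext u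
    rw [mul_comm k (2 * s + 2 - u), Nat.sub_mul, mul_comm k u]
    ring_nf

theorem weilPoly_monic {g k s : ℕ} {a q : R} (hk : 0 < k) (hs : s * k < g) :
    (weilPoly g k s a q).Monic := by
  have hlt {n : ℕ} (h : n < 2 * g) : (n : WithBot ℕ) < ↑(2 * g) := by exact_mod_cast h
  have hterm : ∀ u ∈ Icc 1 s,
      (X ^ (2 * g - u * k) + C (q ^ (g - u * k)) * X ^ (u * k) : R[X]).degree < ↑(2 * g) := by
    intro u hu
    rw [mem_Icc] at hu
    have : u * k ≤ s * k := Nat.mul_le_mul_right k hu.2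
    have : 1 ≤ u * k := Nat.one_le_iff_ne_zero.mpr (Nat.mul_ne_zero (by omega) hk.ne')
    exact (degree_add_le _ _).trans_lt <| max_lt
      ((degree_X_pow_le _).trans_lt (hlt (by omega)))
      ((degree_C_mul_X_pow_le _ _).trans_lt (hlt (by omega)))
  have hconst : (C (q ^ g)).degree < ↑(2 * g) :=
    degree_C_le.trans_lt (by exact_mod_cast (by omega : 0 < 2 * g))
  rw [weilPoly, add_assoc, add_assoc]
  refine monic_X_pow_add <| (degree_add_le _ _).trans_lt <| max_lt
    ((degree_C_mul_X_pow_le _ _).trans_lt (hlt (by omega))) <|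
    (degree_add_le _ _).trans_lt <| max_lt hconst ?_
  exact (degree_sum_le _ _).trans_lt ((Finset.sup_lt_iff (WithBot.bot_lt_coe _)).mpr hterm)

end WeilPoly

theorem cyclotomic_irreducible_zmod_of_orderOf_eq_totient {p n : ℕ} [Fact p.Prime]
    (hpn : ¬p ∣ n) (h : orderOf (p : ZMod n) = φ n) : Irreducible (cyclotomic n (ZMod p)) :=
  ZMod.irreducible_of_dvd_cyclotomic_of_natDegree hpn dvd_rfl <| by
    rw [natDegree_cyclotomic, ← orderOf_units, ZMod.coe_unitOfCoprime, h]

theorem coprime_of_orderOf_natCast_ne_zero {r n : ℕ} [NeZero n] (h : orderOf (r : ZMod n) ≠ 0) :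
    r.Coprime n :=
  (ZMod.isUnit_iff_coprime r n).mp (orderOf_ne_zero_iff.mp h).isUnit

section PrimitiveRootSq

variable {p r : ℕ} (hp : p.Prime) (hr : orderOf (r : ZMod (p ^ 2)) = φ (p ^ 2))
include hp hr

theorem coprime_of_orderOf_eq_totient_sq : r.Coprime p := by
  have : NeZero (p ^ 2) := ⟨pow_ne_zero 2 hp.ne_zero⟩
  refine (Nat.coprime_pow_right_iff two_pos r p).mp (coprime_of_orderOf_natCast_ne_zero ?_)
  rw [hr]
  exact (Nat.totient_pos.mpr (pow_pos hp.pos 2)).ne'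

theorem exists_pow_pred_eq_one_add_mul_of_orderOf_eq_totient_sq :
    ∃ a : ℤ, ¬(p : ℤ) ∣ a ∧ (r : ℤ) ^ (p - 1) = 1 + p * a := by
  have hfermat : (r : ℤ) ^ (p - 1) ≡ 1 [ZMOD p] :=
    Int.ModEq.pow_card_sub_one_eq_one hp
      (Nat.isCoprime_iff_coprime.mpr (coprime_of_orderOf_eq_totient_sq hp hr))
  obtain ⟨a, ha⟩ := hfermat.symm.dvd
  refine ⟨a, fun ⟨c, hc⟩ => ?_, by linarith⟩
  have hpow : (r : ZMod (p ^ 2)) ^ (p - 1) = 1 := by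
    have hdvd : ((p ^ 2 : ℕ) : ℤ) ∣ (r : ℤ) ^ (p - 1) - 1 := ⟨c, by rw [ha, hc]; push_cast; ring⟩
    have := (ZMod.intCast_zmod_eq_zero_iff_dvd _ _).mpr hdvd
    push_cast at this
    exact sub_eq_zero.mp this
  have hle := Nat.le_of_dvd (by have := hp.two_le; omega) (hr ▸ orderOf_dvd_of_pow_eq_one hpow)
  rw [Nat.totient_prime_pow hp two_pos, show 2 - 1 = 1 from rfl, pow_one] at hle
  have := Nat.mul_le_mul_right (p - 1) hp.two_le
  have := hp.two_le
  omega

theorem orderOf_natCast_zmod_prime_pow_of_orderOf_eq_totient_sq (hp2 : p ≠ 2) (n : ℕ) :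
    orderOf (r : ZMod (p ^ (n + 2))) = φ (p ^ (n + 2)) := by
  have hpred_dvd : p - 1 ∣ orderOf (r : ZMod (p ^ (n + 2))) := by
    have := orderOf_map_dvd
      (ZMod.castHom (pow_dvd_pow p (by omega : 2 ≤ n + 2)) (ZMod (p ^ 2))).toMonoidHom
      (r : ZMod (p ^ (n + 2)))
    rw [RingHom.toMonoidHom_eq_coe, MonoidHom.coe_coe, map_natCast, hr,
      Nat.totient_prime_pow hp two_pos] at this
    exact (Dvd.intro_left _ rfl).trans this
  obtain ⟨a, ha, hra⟩ := exists_pow_pred_eq_one_add_mul_of_orderOf_eq_totient_sq hp hr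
  have hpow : (r : ZMod (p ^ (n + 2))) ^ (p - 1) = 1 + p * a := by
    exact_mod_cast congrArg (Int.cast : ℤ → ZMod (p ^ (n + 2))) hra
  have horder := ZMod.orderOf_one_add_mul_prime hp hp2 a ha (n + 1)
  rw [← hpow, orderOf_pow_of_dvd (by have := hp.two_le; omega) hpred_dvd] at horder
  rw [Nat.totient_prime_pow hp (by omega), show n + 2 - 1 = n + 1 from rfl, ← horder,
    Nat.div_mul_cancel hpred_dvd]

theorem cyclotomic_prime_pow_irreducible_zmod_of_orderOf_eq_totient_sq [Fact r.Prime]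
    (hp2 : p ≠ 2) (b : ℕ) : Irreducible (cyclotomic (p ^ b) (ZMod r)) := by
  have hge2 (n : ℕ) : Irreducible (cyclotomic (p ^ (n + 2)) (ZMod r)) :=
    cyclotomic_irreducible_zmod_of_orderOf_eq_totient
      ((Fact.out : r.Prime).coprime_iff_not_dvd.mp
        ((coprime_of_orderOf_eq_totient_sq hp hr).pow_right _))
      (orderOf_natCast_zmod_prime_pow_of_orderOf_eq_totient_sq hp hr hp2 n)
  match b with
  | 0 => simpa using irreducible_X_sub_C (1 : ZMod r)
  | 1 => exact (pow_one p).symm ▸ cyclotomic_irreducible_of_irreducible_pow hp two_ne_zero (hge2 0)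
  | n + 2 => exact hge2 n

end PrimitiveRootSq

theorem poly_congr_cyclotomic_and_irreducible_general (ρ b g : ℕ) (hρ : ρ.Prime) (hρ5 : 5 ≤ ρ)
    (hb : 1 ≤ b) (hg : 2 * g = ρ ^ (b - 1) * (ρ - 1)) (r : ℕ) (hr : r.Prime)
    (hprim : orderOf (r : ZMod (ρ ^ 2)) = (ρ ^ 2).totient)
    (q : ℤ) (hq1 : q ≡ 1 [ZMOD (r : ℤ)]) (m : ℕ) :
    ((X ^ (2 * g) + C ((m : ℤ) * r + 1) * X ^ g + C (q ^ g) +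
        ∑ u ∈ Finset.Icc 1 ((ρ - 3) / 2),
          (X ^ (2 * g - u * ρ ^ (b - 1)) +
            C (q ^ (g - u * ρ ^ (b - 1))) * X ^ (u * ρ ^ (b - 1)))) : Polynomial ℤ).map
        (Int.castRingHom (ZMod r)) = Polynomial.cyclotomic (ρ ^ b) (ZMod r) ∧
    Irreducible
      (((X ^ (2 * g) + C ((m : ℤ) * r + 1) * X ^ g + C (q ^ g) +
        ∑ u ∈ Finset.Icc 1 ((ρ - 3) / 2),
          (X ^ (2 * g - u * ρ ^ (b - 1)) +
            C (q ^ (g - u * ρ ^ (b - 1))) * X ^ (u * ρ ^ (b - 1)))) : Polynomial ℤ).map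
        (Int.castRingHom ℚ)) := by
  have := Fact.mk hr
  have hρ1 : ρ - 1 = 2 * ((ρ - 3) / 2 + 1) := by
    obtain ⟨h, rfl⟩ := hρ.odd_of_ne_two (by omega)
    omega
  have hgk : g = ((ρ - 3) / 2 + 1) * ρ ^ (b - 1) := by
    rw [hρ1] at hg
    linarith
  have hred : (weilPoly g (ρ ^ (b - 1)) ((ρ - 3) / 2) ((m : ℤ) * r + 1) q).map
      (Int.castRingHom (ZMod r)) = cyclotomic (ρ ^ b) (ZMod r) := by
    have ha : Int.castRingHom (ZMod r) ((m : ℤ) * r + 1) = 1 := by simp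
    have hq : Int.castRingHom (ZMod r) q = 1 := by
      simpa using (ZMod.intCast_eq_intCast_iff q 1 r).mpr hq1
    rw [weilPoly_map, ha, hq, hgk, weilPoly_one_one, show 2 * ((ρ - 3) / 2) + 3 = ρ by omega,
      ← cyclotomic_prime_pow_eq_geom_sum hρ, Nat.sub_add_cancel hb]
  have hmonic : (weilPoly g (ρ ^ (b - 1)) ((ρ - 3) / 2) ((m : ℤ) * r + 1) q).Monic := by
    refine weilPoly_monic (pow_pos hρ.pos _) ?_
    rw [hgk]
    exact Nat.mul_lt_mul_of_pos_right (by omega) (pow_pos hρ.pos _)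
  have hirr := cyclotomic_prime_pow_irreducible_zmod_of_orderOf_eq_totient_sq hρ hprim (by omega) b
  exact ⟨hred, (IsPrimitive.Int.irreducible_iff_irreducible_map_cast hmonic.isPrimitive).mp
    (hmonic.irreducible_of_irreducible_map _ _ (hred ▸ hirr))⟩

theorem poly_congr_cyclotomic_and_irreducible (ρ b g : ℕ) (hρ : ρ.Prime) (hρ5 : 5 ≤ ρ)
    (hb : 1 ≤ b) (hg : 2 * g = ρ ^ (b - 1) * (ρ - 1)) (r : ℕ) (hr : r.Prime)
    (hprim : orderOf (r : ZMod (ρ ^ 2)) = (ρ ^ 2).totient)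
    (q : ℤ) (hq : 4 ≤ q) (hq1 : q ≡ 1 [ZMOD (r : ℤ)]) (m : ℕ) :
    ((X ^ (2 * g) + C ((m : ℤ) * r + 1) * X ^ g + C (q ^ g) +
        ∑ u ∈ Finset.Icc 1 ((ρ - 3) / 2),
          (X ^ (2 * g - u * ρ ^ (b - 1)) +
            C (q ^ (g - u * ρ ^ (b - 1))) * X ^ (u * ρ ^ (b - 1)))) : Polynomial ℤ).map
        (Int.castRingHom (ZMod r)) = Polynomial.cyclotomic (ρ ^ b) (ZMod r) ∧
    Irreducible
      (((X ^ (2 * g) + C ((m : ℤ) * r + 1) * X ^ g + C (q ^ g) +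
        ∑ u ∈ Finset.Icc 1 ((ρ - 3) / 2),
          (X ^ (2 * g - u * ρ ^ (b - 1)) +
            C (q ^ (g - u * ρ ^ (b - 1))) * X ^ (u * ρ ^ (b - 1)))) : Polynomial ℤ).map
        (Int.castRingHom ℚ)) :=
  poly_congr_cyclotomic_and_irreducible_general ρ b g hρ hρ5 hb hg r hr hprim q hq1 m
end

section
/- Let g ≥ 1 and let f(t) ∈ ℤ[t] be monic of degree 2g, irreducible over ℚ, whose complex zeros all have modulus q^{1/2} where q = p^n for a prime p and n ≥ 1, and suppose f has at least one non-real zero. Then for every zero θ of f, the field ℚ(θ) is a CM field of degree 2g: specifically, θ + q/θ is a real algebraic number all of whose conjugates are real and lie in [−2√q, 2√q], and ℚ(θ) is a totally imaginary quadratic extension of ℚ(θ + q/θ). -/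
/-!
If `|θ|² = q` then `q / θ = conj θ`, so `α = θ + q / θ = 2 Re θ` is real with `|α| ≤ 2√q`.
The conjugates of `α` are the numbers `θ' + q / θ'` for the conjugates `θ'` of `θ`, so the
same holds for them. No root of `f` is real: a real root would satisfy `θ² = q`, so every root
of its minimal polynomial `f` would be a square root of `q`, hence real, contradicting the
existence of a non-real root. Thus `θ ∉ ℚ(α) ⊆ ℝ` while `θ² - αθ + q = 0`, so
`[ℚ(θ) : ℚ(α)] = 2`.
-/

open Polynomial IntermediateField ComplexConjugate Module

namespace Complex

variable {r : ℝ} {z : ℂ}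

theorem div_eq_conj_of_norm_eq_sqrt (hr : 0 ≤ r) (hz : ‖z‖ = √r) :
    (r : ℂ) / z = conj z := by
  rcases eq_or_ne z 0 with rfl | hz0
  · simp
  rw [div_eq_iff hz0, mul_comm, mul_conj, normSq_eq_norm_sq, hz, Real.sq_sqrt hr]

theorem add_div_eq_two_mul_re (hr : 0 ≤ r) (hz : ‖z‖ = √r) : z + r / z = (2 * z.re : ℝ) := by
  rw [div_eq_conj_of_norm_eq_sqrt hr hz, add_conj, ofReal_mul, ofReal_ofNat]

theorem im_add_div_eq_zero (hr : 0 ≤ r) (hz : ‖z‖ = √r) : (z + r / z).im = 0 := by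
  rw [add_div_eq_two_mul_re hr hz, ofReal_im]

theorem abs_re_add_div_le (hr : 0 ≤ r) (hz : ‖z‖ = √r) :
    |(z + r / z).re| ≤ 2 * √r := by
  rw [add_div_eq_two_mul_re hr hz, ofReal_re, abs_mul, abs_two, ← hz]
  gcongr
  exact abs_re_le_norm z

theorem sq_eq_of_norm_eq_sqrt_of_im_eq_zero (hr : 0 ≤ r) (hz : ‖z‖ = √r) (him : z.im = 0) :
    z ^ 2 = r := by
  have hz_re : z = z.re := ext rfl (by simp [him])
  have hre_sq : z.re ^ 2 = r := by
    rw [← sq_abs, ← Real.norm_eq_abs, ← norm_real, ← hz_re, hz, Real.sq_sqrt hr]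
  rw [hz_re, ← ofReal_pow, hre_sq]

theorem im_eq_zero_of_sq_eq (hr : 0 ≤ r) (hz : z ^ 2 = r) : z.im = 0 := by
  have hre : z.re ^ 2 - z.im ^ 2 = r := by simpa [sq] using congrArg re hz
  have him : z.re * z.im = 0 := by
    have := congrArg im hz
    simp only [sq, mul_im, ofReal_im] at this
    linarith
  rcases mul_eq_zero.mp him with hre0 | him0
  · nlinarith [sq_nonneg z.im]
  · exact him0

theorem im_eq_zero_of_aeval_minpoly_of_sq_eq {q : ℚ} (hq : 0 ≤ q) {w : ℂ} (hz : z ^ 2 = q)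
    (hw : aeval w (minpoly ℚ z) = 0) : w.im = 0 := by
  have hdvd : minpoly ℚ z ∣ X ^ 2 - C q := minpoly.dvd ℚ z (by simp [hz])
  have hw_sq : w ^ 2 = (q : ℝ) := by
    simpa [sub_eq_zero] using aeval_eq_zero_of_dvd_aeval_eq_zero hdvd hw
  exact im_eq_zero_of_sq_eq (by exact_mod_cast hq) hw_sq

theorem im_ne_zero_of_aeval_minpoly {q : ℚ} (hq : 0 ≤ q) {w : ℂ} (hz : ‖z‖ = √q)
    (hw_im : w.im ≠ 0) (hw : aeval w (minpoly ℚ z) = 0) : z.im ≠ 0 := fun hz_im =>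
  hw_im <| im_eq_zero_of_aeval_minpoly_of_sq_eq hq
    (by simpa using sq_eq_of_norm_eq_sqrt_of_im_eq_zero (by exact_mod_cast hq) hz hz_im) hw

theorem im_eq_zero_of_mem_adjoin {S : Set ℂ} (hS : ∀ s ∈ S, s.im = 0) {x : ℂ}
    (hx : x ∈ adjoin ℚ S) : x.im = 0 := by
  induction hx using adjoin_induction with
  | mem y hy => exact hS y hy
  | algebraMap r => simp
  | add a b _ _ ha hb => simp [ha, hb]
  | inv a _ ha => simp [ha]
  | mul a b _ _ ha hb => simp [ha, hb]

end Complex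

theorem IntermediateField.finrank_adjoin_simple_eq_mul_of_mem {F E : Type*} [Field F] [Field E]
    [Algebra F E] {α θ : E} (hα : α ∈ F⟮θ⟯) :
    finrank F F⟮θ⟯ = finrank F F⟮α⟯ * finrank F⟮α⟯ F⟮α⟯⟮θ⟯ := by
  have h : F⟮α⟯⟮θ⟯.restrictScalars F = F⟮θ⟯ := by
    rw [adjoin_simple_adjoin_simple]
    refine le_antisymm (adjoin_le_iff.mpr ?_) (adjoin.mono F _ _ (Set.subset_insert α {θ}))
    exact Set.insert_subset_iff.mpr
      ⟨hα, Set.singleton_subset_iff.mpr (mem_adjoin_simple_self F θ)⟩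
  rw [← h]
  exact (finrank_mul_finrank F F⟮α⟯ F⟮α⟯⟮θ⟯).symm

theorem minpoly.natDegree_eq_two_of_aeval_eq_zero {K L : Type*} [Field K] [Field L]
    [Algebra K L] {θ : L} {p : K[X]} (hp : p.natDegree = 2) (hθ : Polynomial.aeval θ p = 0)
    (hθK : θ ∉ (algebraMap K L).range) :
    (minpoly K θ).natDegree = 2 := by
  have hp0 : p ≠ 0 := by rintro rfl; simp at hp
  have hle := natDegree_le_of_dvd (minpoly.dvd K θ hθ) hp0
  have hint : IsIntegral K θ := IsAlgebraic.isIntegral ⟨p, hp0, hθ⟩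
  have hge := (minpoly.two_le_natDegree_iff hint).mpr hθK
  omega

section AddDiv

variable {E : Type*} [Field E] [CharZero E]

theorem add_div_mem_adjoin (θ : E) (q : ℚ) : θ + q / θ ∈ ℚ⟮θ⟯ :=
  add_mem (mem_adjoin_simple_self ℚ θ)
    (div_mem (SubfieldClass.ratCast_mem _ q) (mem_adjoin_simple_self ℚ θ))

theorem IsIntegral.add_div {θ : E} (hθ : IsIntegral ℚ θ) (q : ℚ) : IsIntegral ℚ (θ + q / θ) :=
  hθ.add (by simpa [div_eq_mul_inv] using (isIntegral_algebraMap (x := q)).mul hθ.inv)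

theorem exists_eq_add_div_of_aeval_minpoly_add_div [IsAlgClosed E] {q : ℚ} {θ z : E}
    (hθ : IsIntegral ℚ θ) (hz : aeval z (minpoly ℚ (θ + q / θ)) = 0) :
    ∃ θ', aeval θ' (minpoly ℚ θ) = 0 ∧ z = θ' + q / θ' := by
  have : FiniteDimensional ℚ ℚ⟮θ⟯ := adjoin.finiteDimensional hθ
  let x : ℚ⟮θ⟯ := ⟨θ + q / θ, add_div_mem_adjoin θ q⟩
  have hz_root : z ∈ (minpoly ℚ x).rootSet E := by
    rw [mem_rootSet, ← minpoly.algebraMap_eq (algebraMap ℚ⟮θ⟯ E).injective x]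
    exact ⟨minpoly.ne_zero (hθ.add_div q), hz⟩
  obtain ⟨ψ, hψ : ψ x = z⟩ :=
    (Algebra.IsAlgebraic.range_eval_eq_rootSet_minpoly (F := ℚ) E x).symm ▸ hz_root
  refine ⟨ψ (AdjoinSimple.gen ℚ θ), ?_, ?_⟩
  · rw [aeval_algHom_apply, ← minpoly_gen]
    exact (congrArg ψ (minpoly.aeval ℚ _)).trans (map_zero ψ)
  · have hx : x = AdjoinSimple.gen ℚ θ + q / AdjoinSimple.gen ℚ θ := rfl
    rw [← hψ, hx, map_add, map_div₀, map_ratCast]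

end AddDiv

/-- Over the real field `ℚ⟮θ + q / θ⟯`, the non-real `θ` is a root of
`X ^ 2 - (θ + q / θ) X + q`, so `ℚ⟮θ⟯` is quadratic over it. -/
theorem natDegree_minpoly_eq_two_mul {q : ℚ} {θ : ℂ} (hθ : IsIntegral ℚ θ) (hθ_im : θ.im ≠ 0)
    (hα_im : (θ + q / θ).im = 0) :
    (minpoly ℚ θ).natDegree = 2 * (minpoly ℚ (θ + q / θ)).natDegree := by
  have hθ_not_mem : θ ∉ (algebraMap ℚ⟮θ + q / θ⟯ ℂ).range := by
    rintro ⟨x, hx⟩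
    exact hθ_im (hx ▸ Complex.im_eq_zero_of_mem_adjoin (by simpa using hα_im) x.2)
  have hθ_root :
      aeval θ (X ^ 2 - C (AdjoinSimple.gen ℚ (θ + q / θ)) * X + C (q : ℚ⟮θ + q / θ⟯)) = 0 := by
    have hθ0 : θ ≠ 0 := fun h => hθ_im (by simp [h])
    simp only [map_add, map_sub, map_mul, map_pow, aeval_X, aeval_C, AdjoinSimple.algebraMap_gen,
      map_ratCast]
    field_simp
    ring
  have hdeg : (minpoly ℚ⟮θ + q / θ⟯ θ).natDegree = 2 :=
    minpoly.natDegree_eq_two_of_aeval_eq_zero (by compute_degree!) hθ_root hθ_not_mem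
  rw [← adjoin.finrank hθ, finrank_adjoin_simple_eq_mul_of_mem (add_div_mem_adjoin θ q),
    adjoin.finrank (hθ.add_div q), adjoin.finrank hθ.tower_top, hdeg, mul_comm]

theorem weil_poly_gives_CM_field_general (g : ℕ) (q : ℕ) (f : Polynomial ℤ) (hmonic : f.Monic)
    (hdeg : f.natDegree = 2 * g) (hirr : Irreducible (f.map (Int.castRingHom ℚ)))
    (hmod : ∀ z : ℂ, Polynomial.aeval z f = 0 → ‖z‖ = Real.sqrt q)
    (hnonreal : ∃ z : ℂ, Polynomial.aeval z f = 0 ∧ z.im ≠ 0) :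
    ∀ θ : ℂ, Polynomial.aeval θ f = 0 →
      (θ + q / θ).im = 0 ∧
      (minpoly ℚ (θ + q / θ)).natDegree = g ∧
      (∀ z : ℂ, Polynomial.aeval z (minpoly ℚ (θ + q / θ)) = 0 →
        z.im = 0 ∧ |z.re| ≤ 2 * Real.sqrt q) ∧
      (minpoly ℚ θ).natDegree = 2 * g ∧
      (∀ z : ℂ, Polynomial.aeval z (minpoly ℚ θ) = 0 → z.im ≠ 0) := by
  have hq : (0 : ℝ) ≤ q := q.cast_nonneg
  have haeval : ∀ z : ℂ, aeval z (f.map (Int.castRingHom ℚ)) = aeval z f := fun z => by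
    rw [← algebraMap_int_eq, aeval_map_algebraMap]
  have hminpoly : ∀ z : ℂ, aeval z f = 0 → minpoly ℚ z = f.map (Int.castRingHom ℚ) := fun z hz =>
    (minpoly.eq_of_irreducible_of_monic hirr (by rwa [haeval]) (hmonic.map _)).symm
  obtain ⟨w, hw, hw_im⟩ := hnonreal
  have hroots_im : ∀ z : ℂ, aeval z f = 0 → z.im ≠ 0 := fun z hz =>
    Complex.im_ne_zero_of_aeval_minpoly (q := q) q.cast_nonneg (by simpa using hmod z hz) hw_im
      (by rwa [hminpoly z hz, haeval])
  intro θ hθ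
  have hθ_int : IsIntegral ℚ θ := (show IsIntegral ℤ θ from ⟨f, hmonic, hθ⟩).tower_top
  have hθ_deg : (minpoly ℚ θ).natDegree = 2 * g := by
    rw [hminpoly θ hθ, hmonic.natDegree_map, hdeg]
  have hα_im : (θ + q / θ).im = 0 := by simpa using Complex.im_add_div_eq_zero hq (hmod θ hθ)
  have hdeg_two_mul : (minpoly ℚ θ).natDegree = 2 * (minpoly ℚ (θ + q / θ)).natDegree := by
    simpa using
      natDegree_minpoly_eq_two_mul (q := q) hθ_int (hroots_im θ hθ) (by simpa using hα_im)
  refine ⟨hα_im, by omega, fun z hz => ?_, hθ_deg, fun z hz => ?_⟩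
  · obtain ⟨θ', hθ', rfl⟩ := exists_eq_add_div_of_aeval_minpoly_add_div (q := q) hθ_int
      (by simpa using hz)
    rw [hminpoly θ hθ, haeval] at hθ'
    simpa using And.intro (Complex.im_add_div_eq_zero hq (hmod θ' hθ'))
      (Complex.abs_re_add_div_le hq (hmod θ' hθ'))
  · rw [hminpoly θ hθ, haeval] at hz
    exact hroots_im z hz

theorem weil_poly_gives_CM_field (g : ℕ) (hg : 1 ≤ g) (p n : ℕ) (hp : p.Prime) (hn : 1 ≤ n)
    (q : ℕ) (hq : q = p ^ n) (f : Polynomial ℤ) (hmonic : f.Monic)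
    (hdeg : f.natDegree = 2 * g) (hirr : Irreducible (f.map (Int.castRingHom ℚ)))
    (hmod : ∀ z : ℂ, Polynomial.aeval z f = 0 → ‖z‖ = Real.sqrt q)
    (hnonreal : ∃ z : ℂ, Polynomial.aeval z f = 0 ∧ z.im ≠ 0) :
    ∀ θ : ℂ, Polynomial.aeval θ f = 0 →
      (θ + q / θ).im = 0 ∧
      (minpoly ℚ (θ + q / θ)).natDegree = g ∧
      (∀ z : ℂ, Polynomial.aeval z (minpoly ℚ (θ + q / θ)) = 0 →
        z.im = 0 ∧ |z.re| ≤ 2 * Real.sqrt q) ∧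
      (minpoly ℚ θ).natDegree = 2 * g ∧
      (∀ z : ℂ, Polynomial.aeval z (minpoly ℚ θ) = 0 → z.im ≠ 0) :=
  weil_poly_gives_CM_field_general g q f hmonic hdeg hirr hmod hnonreal
end
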